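/- arXiv:1212.3261 — 2 statements merged into one kernel-verified Lean document; each statement's English description precedes it below -/
import Mathlib

section
/- Let B be a commutative monoid with zero and suppose the morphism B → S⁻¹B of localization at a multiplicative subset S admits a finite presentation in the categorical sense (filtered colimits of Hom commute). Then S⁻¹B ≅ B[h⁻¹] for a single element h ∈ B; i.e., S⁻¹B is a finite localization, where the saturation of S is generated by finitely many elements. -/
/-- A bundled commutative monoid with zero. -/
structure CMZCat where
  carrier : Type
  str : CommMonoidWithZero carrier

attribute [instance] CMZCat.str

instance : CoeSort CMZCat Type := ⟨CMZCat.carrier⟩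

/-- A directed system of commutative-monoid-with-zero algebras over `B`, together with
its colimit `L`: every element of `L` comes from some stage, and equality in `L` is
detected at some stage. -/
structure DirSysMZ (B : Type) [CommMonoidWithZero B] where
  ι : Type
  le : ι → ι → Prop
  lrefl : ∀ i, le i i
  ltrans : ∀ {i j k}, le i j → le j k → le i k
  nonmpty : Nonempty ι
  directed : ∀ i j, ∃ k, le i k ∧ le j k
  D : ι → CMZCat
  alg : ∀ i, B →*₀ D i
  tr : ∀ {i j}, le i j → (D i →*₀ D j)
  tr_refl : ∀ i (x : D i), tr (lrefl i) x = x
  tr_trans : ∀ {i j k} (h₁ : le i j) (h₂ : le j k) (x : D i),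
    tr h₂ (tr h₁ x) = tr (ltrans h₁ h₂) x
  tr_alg : ∀ {i j} (h : le i j) (b : B), tr h (alg i b) = alg j b
  L : CMZCat
  algL : B →*₀ L
  incl : ∀ i, D i →*₀ L
  incl_alg : ∀ (i) (b : B), incl i (alg i b) = algL b
  incl_tr : ∀ {i j} (h : le i j) (x : D i), incl j (tr h x) = incl i x
  exists_rep : ∀ x : L, ∃ (i : ι) (y : D i), incl i y = x
  eq_stage : ∀ (i : ι) (x y : D i), incl i x = incl i y →
    ∃ (j : ι) (h : le i j), tr h x = tr h y

/-- A morphism `f : B → C` of commutative monoids with zero is of finite presentation in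
the categorical sense: for every directed system of `B`-algebras, the canonical map
`colim Hom_B(C, Dᵢ) → Hom_B(C, colim Dᵢ)` is bijective (unfolded below into the
standard surjectivity and injectivity conditions). -/
def IsCMZFinitePresentation {B C : Type} [CommMonoidWithZero B] [CommMonoidWithZero C]
    (f : B →*₀ C) : Prop :=
  ∀ s : DirSysMZ B,
    (∀ φ : C →*₀ s.L, (∀ b : B, φ (f b) = s.algL b) →
      ∃ (i : s.ι) (ψ : C →*₀ s.D i),
        (∀ b : B, ψ (f b) = s.alg i b) ∧ ∀ c : C, s.incl i (ψ c) = φ c) ∧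
    (∀ (i : s.ι) (ψ₁ ψ₂ : C →*₀ s.D i),
      (∀ b : B, ψ₁ (f b) = s.alg i b) → (∀ b : B, ψ₂ (f b) = s.alg i b) →
      (∀ c : C, s.incl i (ψ₁ c) = s.incl i (ψ₂ c)) →
      ∃ (j : s.ι) (h : s.le i j), ∀ c : C, s.tr h (ψ₁ c) = s.tr h (ψ₂ c))

/-- The localization map `B → S⁻¹B`, `b ↦ b/1`, as a homomorphism of monoids with
zero. -/
noncomputable def locHomMZ {B : Type} [CommMonoidWithZero B] (S : Submonoid B) :
    B →*₀ Localization S :=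
  { toFun := fun b => Localization.mk b 1
    map_zero' := Localization.mk_zero 1
    map_one' := Localization.mk_one
    map_mul' := fun a b => by rw [Localization.mk_mul, one_mul] }

/-!
`S⁻¹B` is the filtered colimit of the localizations `T⁻¹B` over the finitely generated
submonoids `T ≤ S`. Finite presentation lifts the identity of `S⁻¹B` to a `B`-map
`S⁻¹B → T⁻¹B` for one such `T`, so every element of `S` is already invertible in `T⁻¹B`,
i.e. `T⁻¹B = S⁻¹B`. If `T` is generated by `t₁, …, tₖ` and `h = t₁ ⋯ tₖ`, then every element
of `T` divides a power of `h ∈ T`, so `T⁻¹B = B[h⁻¹]`.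
-/

open Localization

namespace Localization

section MonoidWithZero

variable {M : Type*} [CommMonoidWithZero M]

noncomputable def mapOfLE {T U : Submonoid M} (h : T ≤ U) :
    Localization T →*₀ Localization U where
  toFun x := x.liftOn (fun a t => mk a ⟨t, h t.2⟩) fun hr => by
    obtain ⟨c, hc⟩ := r_iff_exists.mp hr
    exact mk_eq_mk_iff.mpr (r_iff_exists.mpr ⟨⟨c, h c.2⟩, hc⟩)
  map_zero' := by rw [liftOn_zero]; exact mk_zero _
  map_one' := by rw [← mk_one, liftOn_mk]; exact mk_one
  map_mul' x y := induction_on₂ x y fun _ _ => by simp only [mk_mul, liftOn_mk]; rfl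

end MonoidWithZero

section Monoid

variable {M : Type*} [CommMonoid M]

lemma isUnit_monoidOf_of_dvd {T : Submonoid M} {s t : M} (ht : t ∈ T) (hst : s ∣ t) :
    IsUnit (monoidOf T s) :=
  isUnit_of_dvd_unit (map_dvd _ hst) ((monoidOf T).map_units ⟨t, ht⟩)

/-- The canonical map `M → T⁻¹M`, as a localization at a larger `S` that becomes invertible
in `T⁻¹M`. -/
def localizationMapOfLE {T S : Submonoid M} (hTS : T ≤ S)
    (hS : ∀ s ∈ S, IsUnit (monoidOf T s)) : S.LocalizationMap (Localization T) :=
  (monoidOf T).toMonoidHom.toLocalizationMap (fun s => hS s s.2)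
    (fun z => by
      obtain ⟨⟨a, t⟩, hz⟩ := (monoidOf T).surj z
      exact ⟨(a, ⟨t, hTS t.2⟩), hz⟩)
    (fun x y hxy => by
      obtain ⟨c, hc⟩ := (monoidOf T).exists_of_eq hxy
      exact ⟨⟨c, hTS c.2⟩, hc⟩)

noncomputable def mulEquivOfLE {T S : Submonoid M} (hTS : T ≤ S)
    (hS : ∀ s ∈ S, IsUnit (monoidOf T s)) : Localization S ≃* Localization T :=
  mulEquivOfQuotient (localizationMapOfLE hTS hS)

@[simp]
lemma mulEquivOfLE_mk_one {T S : Submonoid M} (hTS : T ≤ S)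
    (hS : ∀ s ∈ S, IsUnit (monoidOf T s)) (a : M) :
    mulEquivOfLE hTS hS (mk a 1) = mk a 1 :=
  mulEquivOfQuotient_monoidOf a

end Monoid

end Localization

lemma Submonoid.FG.exists_forall_dvd_pow {M : Type*} [CommMonoid M] {T : Submonoid M}
    (hT : T.FG) : ∃ h ∈ T, ∀ t ∈ T, ∃ n : ℕ, t ∣ h ^ n := by
  obtain ⟨F, rfl⟩ := hT
  refine ⟨∏ x ∈ F, x, prod_mem _ fun x hx => subset_closure hx, fun t ht => ?_⟩
  induction ht using closure_induction with
  | mem x hx => exact ⟨1, by rw [pow_one]; exact Finset.dvd_prod_of_mem _ hx⟩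
  | one => exact ⟨0, one_dvd _⟩
  | mul x y _ _ hx hy =>
    obtain ⟨m, hm⟩ := hx
    obtain ⟨n, hn⟩ := hy
    exact ⟨m + n, pow_add (∏ x ∈ F, x) m n ▸ mul_dvd_mul hm hn⟩

section FinitePresentation

variable {B : Type} [CommMonoidWithZero B]

noncomputable def fgLocalizationSystem (S : Submonoid B) : DirSysMZ B where
  ι := {T : Submonoid B // T.FG ∧ T ≤ S}
  le T U := T.1 ≤ U.1
  lrefl T := le_refl T.1
  ltrans := le_trans
  nonmpty := ⟨⟨⊥, Submonoid.FG.bot, bot_le⟩⟩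
  directed T U := ⟨⟨T.1 ⊔ U.1, T.2.1.sup U.2.1, sup_le T.2.2 U.2.2⟩, le_sup_left, le_sup_right⟩
  D T := ⟨Localization T.1, inferInstance⟩
  alg T := locHomMZ T.1
  tr h := mapOfLE h
  tr_refl _ x := induction_on x fun _ => rfl
  tr_trans _ _ x := induction_on x fun _ => rfl
  tr_alg _ _ := rfl
  L := ⟨Localization S, inferInstance⟩
  algL := locHomMZ S
  incl T := mapOfLE T.2.2
  incl_alg _ _ := rfl
  incl_tr _ x := induction_on x fun _ => rfl
  exists_rep x := induction_on x fun ⟨a, s⟩ =>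
    ⟨⟨Submonoid.powers s, Submonoid.powers_fg (s : B), Submonoid.powers_le.2 s.2⟩,
      mk a ⟨s, Submonoid.mem_powers (s : B)⟩, rfl⟩
  eq_stage T x y hxy := by
    induction x using induction_on with | H p => ?_
    induction y using induction_on with | H q => ?_
    obtain ⟨c, hc⟩ := r_iff_exists.mp (mk_eq_mk_iff.mp hxy)
    refine ⟨⟨T.1 ⊔ Submonoid.powers (c : B), T.2.1.sup (Submonoid.powers_fg (c : B)),
      sup_le T.2.2 (Submonoid.powers_le.2 c.2)⟩, le_sup_left, ?_⟩
    exact mk_eq_mk_iff.mpr (r_iff_exists.mpr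
      ⟨⟨c, Submonoid.mem_sup_right (Submonoid.mem_powers _)⟩, hc⟩)

theorem IsCMZFinitePresentation.exists_fg_le_forall_isUnit {S : Submonoid B}
    (H : IsCMZFinitePresentation (locHomMZ S)) :
    ∃ T : Submonoid B, T.FG ∧ T ≤ S ∧ ∀ s ∈ S, IsUnit (monoidOf T s) := by
  obtain ⟨⟨T, hTfg, hTS⟩, ψ, hψ, -⟩ :=
    (H (fgLocalizationSystem S)).1 (MonoidWithZeroHom.id _) fun _ => rfl
  refine ⟨T, hTfg, hTS, fun s hs => ?_⟩
  exact hψ s ▸ ((monoidOf S).map_units ⟨s, hs⟩).map ψ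

end FinitePresentation

/-- If the localization map `B → S⁻¹B` of a commutative monoid with zero
is of finite presentation in the categorical sense, then `S⁻¹B ≅ B[h⁻¹]` for a single
element `h ∈ B`, compatibly with the maps from `B`; i.e. `S⁻¹B` is a finite
localization. -/
theorem stmt_17 {B : Type} [CommMonoidWithZero B] (S : Submonoid B)
    (H : IsCMZFinitePresentation (locHomMZ S)) :
    ∃ (h : B) (e : Localization S ≃* Localization (Submonoid.powers h)),
      ∀ b : B, e (Localization.mk b 1) = Localization.mk b 1 := by
  obtain ⟨T, hTfg, hTS, hS⟩ := H.exists_fg_le_forall_isUnit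
  obtain ⟨h, hT, hdvd⟩ := hTfg.exists_forall_dvd_pow
  have hT_units : ∀ t ∈ T, IsUnit (monoidOf (Submonoid.powers h) t) := fun t ht =>
    have ⟨n, hn⟩ := hdvd t ht
    isUnit_monoidOf_of_dvd (pow_mem (Submonoid.mem_powers h) n) hn
  refine ⟨h, (mulEquivOfLE hTS hS).trans
    (mulEquivOfLE (Submonoid.powers_le.2 hT) hT_units), fun b => ?_⟩
  rw [MulEquiv.trans_apply, mulEquivOfLE_mk_one, mulEquivOfLE_mk_one]
end

section
/- Let B be a commutative ring, S ⊆ B a multiplicative subset, f : B → C and g : C → S⁻¹B ring homomorphisms with g ∘ f equal to the canonical localization map, and suppose Spec(f) : Spec C → Spec B is an open immersion. Let T = f(S). Then f induces an isomorphism of rings f_S : S⁻¹B → T⁻¹C. -/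
open AlgebraicGeometry

/-!
An open immersion is a monomorphism of schemes, and `Spec` is fully faithful, so `f` is an
epimorphism of rings. Sending `T` to units, `g` induces `φ : T⁻¹C → S⁻¹B`, and `φ ∘ f_S = id`
because both are determined on `B`. Conversely `f_S ∘ g` and the localization map `C → T⁻¹C`
agree after composing with `f`, hence agree because `f` is epi; therefore `f_S ∘ φ = id`.
-/

open CategoryTheory

universe u

theorem AlgebraicGeometry.epi_of_isOpenImmersion_spec_map {R S : CommRingCat} (φ : R ⟶ S)
    [IsOpenImmersion (Spec.map φ)] : Epi φ := by
  have : Mono φ.op := Scheme.Spec.mono_of_mono_map (inferInstanceAs (Mono (Spec.map φ)))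
  exact unop_epi_of_mono φ.op

theorem RingHom.cancel_right_of_epi {B C D : Type u} [CommRing B] [CommRing C] [CommRing D]
    {f : B →+* C} [Epi (CommRingCat.ofHom f)] {h₁ h₂ : C →+* D}
    (h : h₁.comp f = h₂.comp f) : h₁ = h₂ := by
  have := (cancel_epi (CommRingCat.ofHom f) (Z := CommRingCat.of D)
    (g := CommRingCat.ofHom h₁) (h := CommRingCat.ofHom h₂)).mp
    (by rw [← CommRingCat.ofHom_comp, ← CommRingCat.ofHom_comp, h])
  exact congrArg CommRingCat.Hom.hom this

namespace IsLocalization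

variable {B C : Type u} {M : Type*} [CommRing B] [CommRing C] [CommRing M]
  {S : Submonoid B} [Algebra B M] [IsLocalization S M] {f : B →+* C} {g : C →+* M}

theorem isUnit_of_mem_map_of_comp_eq (hgf : g.comp f = algebraMap B M) {c : C}
    (hc : c ∈ S.map f) : IsUnit (g c) := by
  obtain ⟨s, hs, rfl⟩ := hc
  rw [← RingHom.comp_apply, hgf]
  exact map_units M ⟨s, hs⟩

theorem map_bijective_of_epi {N : Type u} [CommRing N] [Algebra C N] [IsLocalization (S.map f) N]
    [Epi (CommRingCat.ofHom f)] (hgf : g.comp f = algebraMap B M) :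
    Function.Bijective (map N f S.le_comap_map : M →+* N) := by
  set ψ : M →+* N := map N f S.le_comap_map
  let φ : N →+* M := lift (M := S.map f) fun t ↦ isUnit_of_mem_map_of_comp_eq hgf t.2
  have hg (b : B) : g (f b) = algebraMap B M b := by rw [← RingHom.comp_apply, hgf]
  have hφψ : φ.comp ψ = RingHom.id M := ringHom_ext S <| RingHom.ext fun b ↦ by
    simp [ψ, φ, map_eq, lift_eq, hg]
  have hψg : ψ.comp g = algebraMap C N :=
    RingHom.cancel_right_of_epi (f := f) <| RingHom.ext fun b ↦ by simp [ψ, map_eq, hg]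
  have hψφ : ψ.comp φ = RingHom.id N := ringHom_ext (S.map f) <| RingHom.ext fun c ↦ by
    simp only [RingHom.comp_apply, RingHom.id_apply, φ, lift_eq]
    rw [← RingHom.comp_apply, hψg]
  exact Function.bijective_iff_has_inverse.mpr
    ⟨φ, RingHom.congr_fun hφψ, RingHom.congr_fun hψφ⟩

end IsLocalization

/-- Let `B` be a commutative ring, `S ⊆ B` a multiplicative subset, and
`f : B → C`, `g : C → S⁻¹B` ring homomorphisms with `g ∘ f` the canonical localization
map. If `Spec f : Spec C → Spec B` is an open immersion then, with `T = f(S)`, the map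
`f` induces an isomorphism of rings `f_S : S⁻¹B → T⁻¹C`. -/
theorem stmt_19 {B C : Type} [CommRing B] [CommRing C] (S : Submonoid B)
    (f : B →+* C) (g : C →+* Localization S)
    (hgf : g.comp f = algebraMap B (Localization S))
    (hopen : IsOpenImmersion (Spec.map (CommRingCat.ofHom f))) :
    ∃ e : Localization S ≃+* Localization (S.map f.toMonoidHom),
      ∀ (b : B) (s : S), e (Localization.mk b s) =
        Localization.mk (f b) ⟨f s, Submonoid.mem_map_of_mem f.toMonoidHom s.2⟩ := by
  have := epi_of_isOpenImmersion_spec_map (CommRingCat.ofHom f)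
  -- `S.map f` and `S.map f.toMonoidHom` agree only after unfolding, which instance search won't do
  have : IsLocalization (S.map f) (Localization (S.map f.toMonoidHom)) :=
    Localization.isLocalization
  refine ⟨.ofBijective _ (IsLocalization.map_bijective_of_epi
    (S := S) (N := Localization (S.map f.toMonoidHom)) hgf), fun b s ↦ ?_⟩
  rw [RingEquiv.ofBijective_apply, Localization.mk_eq_mk', Localization.mk_eq_mk']
  exact IsLocalization.map_mk' _ b s
end
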